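/- arXiv:1410.1665 — 5 statements merged into one kernel-verified Lean document; each statement's English description precedes it below -/
import Mathlib

section
/- Let A be a C*-algebra and let (e_α) be an approximate identity for A, i.e. a net of positive elements of A with ‖e_α‖ ≤ 1 for all α and ‖e_α a − a‖ → 0 and ‖a e_α − a‖ → 0 for every a ∈ A. Let (μ_β) be a net in the continuous dual A* and let μ ∈ A* be such that μ_β → μ in the weak-* topology and ‖μ_β‖ → ‖μ‖. Then for every ε > 0: there exist indices α₀ and β₀ such that ‖e_{α₀}·μ_β − μ_β‖ < ε for every β ≥ β₀ and ‖e_{α₀}·μ − μ‖ < ε; and likewise there exist indices α₁ and β₁ such that ‖μ_β·e_{α₁} − μ_β‖ < ε for every β ≥ β₁ and ‖μ·e_{α₁} − μ‖ < ε. -/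
/-!
Suppose `‖a‖ ≤ 1` nearly norms a functional `f`, i.e. `‖f‖ ≤ ‖f a‖ + η`, and the perturbations
`a + T v` with `‖v‖ ≤ t` stay in the ball of radius `1 + 3t²`. Rotating the phase of `f (T v)`
onto that of `f a` gives `‖f a‖ + t ‖f ∘ T‖ ≤ ‖f‖ (1 + 3t²)`, hence `‖f ∘ T‖ ≤ 3t ‖f‖ + η / t`.
For `T v = v e - v` (or `e v - v`) with `e ≥ 0`, `‖e‖ ≤ 1` and `‖a e - a‖ ≤ t`, the C*-identity
`‖x‖² = ‖x⋆ x‖` gives the `1 + 3t²` bound. Finally a single `a` nearly norms `μ` and, since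
`μ_β a → μ a` and `‖μ_β‖ → ‖μ‖`, also every `μ_β` with `β` large.
-/

open Filter Topology

theorem RCLike.exists_norm_eq_one_and_norm_add_mul_eq {𝕜 : Type*} [RCLike 𝕜] (x y : 𝕜) :
    ∃ c : 𝕜, ‖c‖ = 1 ∧ ‖x + c * y‖ = ‖x‖ + ‖y‖ := by
  obtain ⟨u, hu, hux⟩ := RCLike.exists_norm_eq_mul_self y
  obtain ⟨w, hw, hwx⟩ := RCLike.exists_norm_eq_mul_self x
  have hw0 : w ≠ 0 := norm_ne_zero_iff.mp (by rw [hw]; exact one_ne_zero)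
  refine ⟨u / w, by simp [hu, hw], ?_⟩
  have : x + u / w * y = (w * x + u * y) / w := by field_simp
  rw [this, ← hux, ← hwx, norm_div, hw, div_one, ← RCLike.ofReal_add, RCLike.norm_ofReal,
    abs_of_nonneg (by positivity)]

theorem ContinuousLinearMap.norm_apply_add_mul_norm_comp_le {𝕜 E : Type*} [RCLike 𝕜]
    [SeminormedAddCommGroup E] [NormedSpace 𝕜 E] (f : E →L[𝕜] 𝕜) (T : E →L[𝕜] E) (a : E)
    {t C : ℝ} (ht : 0 < t) (h : ∀ v, ‖v‖ ≤ t → ‖a + T v‖ ≤ C) :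
    ‖f a‖ + t * ‖f.comp T‖ ≤ ‖f‖ * C := by
  have hfa : ‖f a‖ ≤ ‖f‖ * C :=
    (f.le_opNorm a).trans <| mul_le_mul_of_nonneg_left (by simpa using h 0 (by simpa using ht.le))
      (norm_nonneg f)
  suffices ‖f.comp T‖ ≤ (‖f‖ * C - ‖f a‖) / t by
    rw [le_div_iff₀ ht] at this; linarith
  refine ContinuousLinearMap.opNorm_le_of_unit_norm (div_nonneg (by linarith) ht.le) fun z hz => ?_
  rw [le_div_iff₀ ht]
  obtain ⟨c, hc, hphase⟩ :=
    RCLike.exists_norm_eq_one_and_norm_add_mul_eq (f a) (f (T ((t : 𝕜) • z)))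
  have hv : ‖c • (t : 𝕜) • z‖ ≤ t := by
    simp [norm_smul, hc, hz, abs_of_pos ht]
  have key : ‖f a‖ + ‖f (T ((t : 𝕜) • z))‖ ≤ ‖f‖ * C := by
    rw [← hphase, ← smul_eq_mul, ← map_smul, ← map_smul, ← map_add]
    exact (f.le_opNorm _).trans (mul_le_mul_of_nonneg_left (h _ hv) (norm_nonneg f))
  simp only [map_smul, norm_smul, RCLike.norm_ofReal, abs_of_pos ht] at key
  simp only [ContinuousLinearMap.comp_apply]
  linarith

theorem exists_eventually_norm_comp_sub_lt {𝕜 E κ ι : Type*} [RCLike 𝕜]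
    [NormedAddCommGroup E] [NormedSpace 𝕜 E] (S : κ → E →L[𝕜] E)
    (hS : ∀ a : E, ‖a‖ ≤ 1 → ∀ t > 0, ∃ α, ∀ v, ‖v‖ ≤ t → ‖a + (S α v - v)‖ ≤ 1 + 3 * t ^ 2)
    {l : Filter ι} (f : ι → E →L[𝕜] 𝕜) (g : E →L[𝕜] 𝕜)
    (hf : ∀ a, Tendsto (fun β => f β a) l (𝓝 (g a))) (hnorm : Tendsto (fun β => ‖f β‖) l (𝓝 ‖g‖))
    {ε : ℝ} (hε : 0 < ε) :
    ∃ α, (∀ᶠ β in l, ‖(f β).comp (S α) - f β‖ < ε) ∧ ‖g.comp (S α) - g‖ < ε := by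
  set K := ‖g‖ + 1
  have hK : 0 < K := by positivity
  -- so that `3 t ‖φ‖ + 3 η / t ≤ ε / 2 + ε / 4` whenever `‖φ‖ ≤ K`
  obtain ⟨t, ht, htK⟩ : ∃ t > 0, t * K = ε / 6 := ⟨ε / (6 * K), by positivity, by field_simp⟩
  set η := ε * t / 12 with hη
  have hη0 : 0 < η := by positivity
  obtain ⟨a, ha, hga⟩ := g.exists_lt_apply_of_lt_opNorm (show ‖g‖ - η < ‖g‖ by linarith)
  obtain ⟨α, hα⟩ := hS a ha.le t ht
  have hfixed : ∀ φ : E →L[𝕜] 𝕜, ‖φ‖ ≤ K → ‖φ‖ ≤ ‖φ a‖ + 3 * η →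
      ‖φ.comp (S α) - φ‖ < ε := by
    intro φ hφK hφa
    have key := φ.norm_apply_add_mul_norm_comp_le (S α - .id 𝕜 E) a ht hα
    rw [ContinuousLinearMap.comp_sub, ContinuousLinearMap.comp_id] at key
    refine lt_of_mul_lt_mul_left ?_ ht.le
    nlinarith [mul_le_mul_of_nonneg_right hφK (sq_nonneg t)]
  refine ⟨α, ?_, hfixed g (by linarith) (by linarith)⟩
  have hbounded : ∀ᶠ β in l, ‖f β‖ < K := hnorm.eventually_lt_const (by linarith)
  have hnear : ∀ᶠ β in l, ‖f β‖ < ‖g‖ + η := hnorm.eventually_lt_const (by linarith)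
  have hattained : ∀ᶠ β in l, ‖g a‖ - η < ‖f β a‖ := (hf a).norm.eventually_const_lt (by linarith)
  filter_upwards [hbounded, hnear, hattained] with β hβK hβη hβa
  exact hfixed (f β) hβK.le (by linarith)

section CStarRing

variable {A : Type*} [NonUnitalNormedRing A] [StarRing A] [CStarRing A]

theorem CStarRing.norm_add_sq_le (x w : A) :
    ‖x + w‖ ^ 2 ≤ ‖x‖ ^ 2 + 2 * ‖star x * w‖ + ‖w‖ ^ 2 := by
  have hexp : star (x + w) * (x + w) =
      star x * x + star x * w + star (star x * w) + star w * w := by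
    rw [star_add, star_mul, star_star]; noncomm_ring
  calc ‖x + w‖ ^ 2 = ‖star (x + w) * (x + w)‖ := by rw [CStarRing.norm_star_mul_self, sq]
    _ ≤ ‖star x * x‖ + ‖star x * w‖ + ‖star (star x * w)‖ + ‖star w * w‖ := by
      rw [hexp]; exact norm_add₄_le
    _ = ‖x‖ ^ 2 + 2 * ‖star x * w‖ + ‖w‖ ^ 2 := by
      rw [norm_star, CStarRing.norm_star_mul_self, CStarRing.norm_star_mul_self]; ring

theorem CStarRing.norm_add_mul_left_sub_le {e a v : A} {t : ℝ} (he : IsSelfAdjoint e)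
    (he1 : ‖e‖ ≤ 1) (ha : ‖a‖ ≤ 1) (hea : ‖e * a - a‖ ≤ t) (hv : ‖v‖ ≤ t) :
    ‖a + (e * v - v)‖ ≤ 1 + 3 * t ^ 2 := by
  have ht : 0 ≤ t := (norm_nonneg v).trans hv
  have hcross : ‖star a * (e * v - v)‖ ≤ t * t := by
    have : star a * (e * v - v) = star (e * a - a) * v := by
      rw [star_sub, star_mul, he.star_eq, mul_sub, sub_mul, mul_assoc]
    rw [this]
    exact (norm_mul_le _ _).trans (by rw [norm_star]; gcongr)
  have hw : ‖e * v - v‖ ≤ 2 * t :=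
    calc ‖e * v - v‖ ≤ ‖e‖ * ‖v‖ + ‖v‖ :=
          (norm_sub_le _ _).trans (by gcongr; exact norm_mul_le _ _)
      _ ≤ 1 * t + t := by gcongr
      _ = 2 * t := by ring
  have hsq := CStarRing.norm_add_sq_le a (e * v - v)
  have : ‖a + (e * v - v)‖ ^ 2 ≤ (1 + 3 * t ^ 2) ^ 2 := by
    nlinarith [pow_le_pow_left₀ (norm_nonneg _) ha 2, pow_le_pow_left₀ (norm_nonneg _) hw 2]
  exact le_of_sq_le_sq this (by positivity)

theorem CStarRing.norm_add_mul_right_sub_le {e a v : A} {t : ℝ} (he : IsSelfAdjoint e)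
    (he1 : ‖e‖ ≤ 1) (ha : ‖a‖ ≤ 1) (hae : ‖a * e - a‖ ≤ t) (hv : ‖v‖ ≤ t) :
    ‖a + (v * e - v)‖ ≤ 1 + 3 * t ^ 2 := by
  have hstar : ∀ x y : A, ‖x + (y * e - y)‖ = ‖star x + (e * star y - star y)‖ := fun x y => by
    rw [← norm_star, star_add, star_sub, star_mul, he.star_eq]
  have hea : ‖e * star a - star a‖ ≤ t := by
    rwa [← norm_star, star_sub, star_mul, star_star, he.star_eq]
  have h := norm_add_mul_left_sub_le he he1 (by rwa [norm_star]) hea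
    (by rwa [norm_star] : ‖star v‖ ≤ t)
  rwa [← hstar] at h

end CStarRing

theorem approx_identity_dual_net_general
    {A : Type*} [NonUnitalNormedRing A] [StarRing A] [CStarRing A]
    [NormedSpace ℂ A] [IsScalarTower ℂ A A] [SMulCommClass ℂ A A]
    [PartialOrder A] [StarOrderedRing A]
    {κ : Type*} [Nonempty κ] [SemilatticeSup κ]
    {ι : Type*} [Nonempty ι] [SemilatticeSup ι]
    (e : κ → A)
    (he_pos : ∀ α, 0 ≤ e α) (he_norm : ∀ α, ‖e α‖ ≤ 1)
    (he_left : ∀ a : A, Tendsto (fun α => ‖e α * a - a‖) atTop (nhds 0))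
    (he_right : ∀ a : A, Tendsto (fun α => ‖a * e α - a‖) atTop (nhds 0))
    (μβ : ι → (A →L[ℂ] ℂ)) (μ : A →L[ℂ] ℂ)
    (hweakstar : ∀ a : A, Tendsto (fun β => μβ β a) atTop (nhds (μ a)))
    (hnorm : Tendsto (fun β => ‖μβ β‖) atTop (nhds ‖μ‖)) :
    ∀ ε > (0 : ℝ),
      (∃ α₀ β₀, (∀ β ≥ β₀,
          ‖(μβ β).comp ((ContinuousLinearMap.mul ℂ A).flip (e α₀)) - μβ β‖ < ε) ∧
          ‖μ.comp ((ContinuousLinearMap.mul ℂ A).flip (e α₀)) - μ‖ < ε) ∧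
      (∃ α₁ β₁, (∀ β ≥ β₁,
          ‖(μβ β).comp (ContinuousLinearMap.mul ℂ A (e α₁)) - μβ β‖ < ε) ∧
          ‖μ.comp (ContinuousLinearMap.mul ℂ A (e α₁)) - μ‖ < ε) := by
  intro ε hε
  have he_sa : ∀ α, IsSelfAdjoint (e α) := fun α => .of_nonneg (he_pos α)
  have hright : ∀ a : A, ‖a‖ ≤ 1 → ∀ t > 0, ∃ α, ∀ v : A, ‖v‖ ≤ t →
      ‖a + ((ContinuousLinearMap.mul ℂ A).flip (e α) v - v)‖ ≤ 1 + 3 * t ^ 2 := fun a ha t ht =>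
    let ⟨α, hα⟩ := ((he_right a).eventually_lt_const ht).exists
    ⟨α, fun _ hv => CStarRing.norm_add_mul_right_sub_le (he_sa α) (he_norm α) ha hα.le hv⟩
  have hleft : ∀ a : A, ‖a‖ ≤ 1 → ∀ t > 0, ∃ α, ∀ v : A, ‖v‖ ≤ t →
      ‖a + (ContinuousLinearMap.mul ℂ A (e α) v - v)‖ ≤ 1 + 3 * t ^ 2 := fun a ha t ht =>
    let ⟨α, hα⟩ := ((he_left a).eventually_lt_const ht).exists
    ⟨α, fun _ hv => CStarRing.norm_add_mul_left_sub_le (he_sa α) (he_norm α) ha hα.le hv⟩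
  obtain ⟨α₀, hμβ₀, hμ₀⟩ := exists_eventually_norm_comp_sub_lt _ hright μβ μ hweakstar hnorm hε
  obtain ⟨α₁, hμβ₁, hμ₁⟩ := exists_eventually_norm_comp_sub_lt _ hleft μβ μ hweakstar hnorm hε
  obtain ⟨β₀, hβ₀⟩ := eventually_atTop.mp hμβ₀
  obtain ⟨β₁, hβ₁⟩ := eventually_atTop.mp hμβ₁
  exact ⟨⟨α₀, β₀, hβ₀, hμ₀⟩, ⟨α₁, β₁, hβ₁, hμ₁⟩⟩

/-- **Lemma 4.2.** Let `A` be a C*-algebra and `(e α)` an approximate identity for `A`.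
If `(μ β)` is a net in `A*` converging weak-* to `μ` with `‖μ β‖ → ‖μ‖`, then for every
`ε > 0` there are indices `α₀, β₀` with `‖e α₀ · μ β − μ β‖ < ε` for all `β ≥ β₀` and
`‖e α₀ · μ − μ‖ < ε`, and likewise on the other side.  Here `b·ν : a ↦ ν (a * b)` and
`ν·b : a ↦ ν (b * a)`. -/
theorem approx_identity_dual_net
    {A : Type*} [NonUnitalNormedRing A] [StarRing A] [CStarRing A]
    [NormedSpace ℂ A] [IsScalarTower ℂ A A] [SMulCommClass ℂ A A]
    [CompleteSpace A] [PartialOrder A] [StarOrderedRing A]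
    {κ : Type*} [Nonempty κ] [SemilatticeSup κ]
    {ι : Type*} [Nonempty ι] [SemilatticeSup ι]
    (e : κ → A)
    (he_pos : ∀ α, 0 ≤ e α) (he_norm : ∀ α, ‖e α‖ ≤ 1)
    (he_left : ∀ a : A, Tendsto (fun α => ‖e α * a - a‖) atTop (nhds 0))
    (he_right : ∀ a : A, Tendsto (fun α => ‖a * e α - a‖) atTop (nhds 0))
    (μβ : ι → (A →L[ℂ] ℂ)) (μ : A →L[ℂ] ℂ)
    (hweakstar : ∀ a : A, Tendsto (fun β => μβ β a) atTop (nhds (μ a)))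
    (hnorm : Tendsto (fun β => ‖μβ β‖) atTop (nhds ‖μ‖)) :
    ∀ ε > (0 : ℝ),
      (∃ α₀ β₀, (∀ β ≥ β₀,
          ‖(μβ β).comp ((ContinuousLinearMap.mul ℂ A).flip (e α₀)) - μβ β‖ < ε) ∧
          ‖μ.comp ((ContinuousLinearMap.mul ℂ A).flip (e α₀)) - μ‖ < ε) ∧
      (∃ α₁ β₁, (∀ β ≥ β₁,
          ‖(μβ β).comp (ContinuousLinearMap.mul ℂ A (e α₁)) - μβ β‖ < ε) ∧
          ‖μ.comp (ContinuousLinearMap.mul ℂ A (e α₁)) - μ‖ < ε) :=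
  approx_identity_dual_net_general e he_pos he_norm he_left he_right μβ μ hweakstar hnorm
end

section
/- Let G be a second-countable locally compact Hausdorff topological group with left Haar measure λ. Let (μ_β) be a net of finite positive Borel measures on G and let μ be a finite positive Borel measure on G such that ∫_G g dμ_β → ∫_G g dμ for every g ∈ C₀(G) and μ_β(G) → μ(G). Then for every f ∈ L¹(G, λ), the convolutions μ_β ⋆ f converge to μ ⋆ f in the L¹-norm: ‖μ_β ⋆ f − μ ⋆ f‖_{L¹(G,λ)} → 0, where for a finite positive measure ν the convolution ν ⋆ f is the λ-a.e. defined function x ↦ ∫_G f(s⁻¹ x) dν(s), which belongs to L¹(G, λ) with ‖ν ⋆ f‖₁ ≤ ν(G)‖f‖₁. -/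
/-!
Let `g` be continuous with compact support. Weak-* convergence together with convergence of the
total masses makes the net tight: for a bump `u` equal to `1` on a compact `K₀` carrying most of
`μ`, the mass of `μ_β` outside `K = tsupport u` is at most `μ_β(G) - ∫ u dμ_β`, which tends to
`μ(G) - ∫ u dμ ≤ μ(K₀ᶜ)`. Hence outside `C = K · tsupport g` all the `μ_β ⋆ g` are small in `L¹`.
On `C` the `μ_β ⋆ g` converge pointwise (test against `s ↦ g (s⁻¹ x)`) and are eventually
equicontinuous, as `g` is uniformly continuous and the masses are eventually bounded; so they
converge uniformly on the compact set `C`. A general `f ∈ L¹` is approximated by such `g`, using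
`‖ν ⋆ h‖₁ ≤ ν(G) ‖h‖₁`.
-/

open MeasureTheory Filter Topology Set ZeroAtInfty
open scoped Pointwise

namespace MeasureTheory

variable {G E : Type*} [Group G] [NormedAddCommGroup E]

-- Where `s ↦ f (s⁻¹ * x)` is not `ν`-integrable this is `0`; for `f ∈ L¹` that happens only on a
-- null set of `x`.
noncomputable def measureConv [MeasurableSpace G] [NormedSpace ℝ E] (ν : Measure G) (f : G → E)
    (x : G) : E :=
  ∫ s, f (s⁻¹ * x) ∂ν

section TopologicalGroup

variable [TopologicalSpace G] [IsTopologicalGroup G] {g : G → E}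

theorem _root_.HasCompactSupport.comp_inv_mul (hg : HasCompactSupport g) (x : G) :
    HasCompactSupport fun s => g (s⁻¹ * x) :=
  hg.comp_homeomorph ((Homeomorph.inv G).trans (Homeomorph.mulRight x))

theorem _root_.HasCompactSupport.eventually_forall_dist_mul_right_lt (hgc : HasCompactSupport g)
    (hg : Continuous g) {ε : ℝ} (hε : 0 < ε) :
    ∀ᶠ h in 𝓝 (1 : G), ∀ u, dist (g (u * h)) (g u) < ε := by
  let := IsTopologicalGroup.rightUniformSpace G
  -- `g` is left uniformly continuous, i.e. `y ↦ g y⁻¹` is right uniformly continuous.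
  have huc : UniformContinuous fun y => g y⁻¹ :=
    (hgc.comp_homeomorph (Homeomorph.inv G)).uniformContinuous_of_continuous (by fun_prop)
  obtain ⟨W, hW, hWε⟩ := mem_comap.1 (huc (Metric.dist_mem_uniformity hε))
  filter_upwards [inv_mem_nhds_one G hW] with h hh u
  have := @hWε (u⁻¹, h⁻¹ * u⁻¹) (by simpa using hh)
  simpa [dist_comm] using this

end TopologicalGroup

section MeasurableGroup

variable [MeasurableSpace G] [MeasurableMul₂ G] [MeasurableInv G] {lam : Measure G} [SFinite lam]
  [lam.IsMulLeftInvariant]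

theorem map_inv_mul_prod_eq_smul (ν : Measure G) [SFinite ν] :
    (ν.prod lam).map (fun z : G × G => z.1⁻¹ * z.2) = ν univ • lam := by
  have hshear : Measurable fun z : G × G => (z.1, z.1⁻¹ * z.2) :=
    measurable_fst.prodMk (measurable_fst.inv.mul measurable_snd)
  calc (ν.prod lam).map (fun z : G × G => z.1⁻¹ * z.2)
      = ((ν.prod lam).map fun z : G × G => (z.1, z.1⁻¹ * z.2)).map Prod.snd :=
        (Measure.map_map measurable_snd hshear).symm
    _ = ν univ • lam := by
        rw [(measurePreserving_prod_inv_mul ν lam).map_eq, Measure.map_snd_prod]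

variable {ν μ : Measure G} [IsFiniteMeasure ν] [IsFiniteMeasure μ] {f g : G → E}

theorem Integrable.comp_inv_mul_prod (hf : Integrable f lam) :
    Integrable (fun z : G × G => f (z.1⁻¹ * z.2)) (ν.prod lam) := by
  have hm : Measurable fun z : G × G => z.1⁻¹ * z.2 := measurable_fst.inv.mul measurable_snd
  have hf' : Integrable f ((ν.prod lam).map fun z : G × G => z.1⁻¹ * z.2) := by
    rw [map_inv_mul_prod_eq_smul]
    exact hf.smul_measure (measure_ne_top ν univ)
  exact (integrable_map_measure hf'.aestronglyMeasurable hm.aemeasurable).1 hf'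

theorem Integrable.ae_integrable_comp_inv_mul (hf : Integrable f lam) :
    ∀ᵐ x ∂lam, Integrable (fun s => f (s⁻¹ * x)) ν :=
  (hf.comp_inv_mul_prod (ν := ν)).swap.prod_right_ae

variable [NormedSpace ℝ E]

theorem Integrable.measureConv (hf : Integrable f lam) : Integrable (measureConv ν f) lam :=
  (hf.comp_inv_mul_prod (ν := ν)).swap.integral_prod_left

theorem integral_norm_measureConv_le (hf : Integrable f lam) :
    ∫ x, ‖measureConv ν f x‖ ∂lam ≤ ν.real univ * ∫ x, ‖f x‖ ∂lam := by
  have hF := (hf.comp_inv_mul_prod (ν := ν)).swap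
  calc ∫ x, ‖measureConv ν f x‖ ∂lam
      ≤ ∫ x, ∫ s, ‖f (s⁻¹ * x)‖ ∂ν ∂lam :=
        integral_mono hf.measureConv.norm hF.integral_norm_prod_left
          fun x => norm_integral_le_integral_norm _
    _ = ∫ s, ∫ x, ‖f (s⁻¹ * x)‖ ∂lam ∂ν := integral_integral_swap hF.norm
    _ = ν.real univ * ∫ x, ‖f x‖ ∂lam := by
        simp only [integral_mul_left_eq_self (fun x => ‖f x‖), integral_const, smul_eq_mul]

theorem measureConv_sub_ae_eq (hf : Integrable f lam) (hg : Integrable g lam) :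
    measureConv ν (f - g) =ᵐ[lam] measureConv ν f - measureConv ν g := by
  filter_upwards [hf.ae_integrable_comp_inv_mul (ν := ν), hg.ae_integrable_comp_inv_mul (ν := ν)]
    with x hfx hgx
  exact integral_sub hfx hgx

theorem integral_norm_measureConv_sub_le (hf : Integrable f lam) (hg : Integrable g lam) :
    ∫ x, ‖measureConv ν f x - measureConv μ f x‖ ∂lam ≤
      ∫ x, ‖measureConv ν g x - measureConv μ g x‖ ∂lam +
        (ν.real univ + μ.real univ) * ∫ x, ‖f x - g x‖ ∂lam := by
  have hfg := hf.sub hg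
  have hpt : ∀ᵐ x ∂lam, ‖measureConv ν f x - measureConv μ f x‖ ≤
      ‖measureConv ν g x - measureConv μ g x‖ +
        (‖measureConv ν (f - g) x‖ + ‖measureConv μ (f - g) x‖) := by
    filter_upwards [measureConv_sub_ae_eq (ν := ν) hf hg, measureConv_sub_ae_eq (ν := μ) hf hg]
      with x hν hμ
    rw [hν, hμ, Pi.sub_apply, Pi.sub_apply]
    calc _ = ‖(measureConv ν g x - measureConv μ g x) +
          ((measureConv ν f x - measureConv ν g x) - (measureConv μ f x - measureConv μ g x))‖ := by
          congr 1; abel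
      _ ≤ _ := (norm_add_le _ _).trans (add_le_add le_rfl (norm_sub_le _ _))
  have hg' : Integrable (fun x => ‖measureConv ν g x - measureConv μ g x‖) lam :=
    (hg.measureConv.sub hg.measureConv).norm
  have hνfg : Integrable (fun x => ‖measureConv ν (f - g) x‖) lam := hfg.measureConv.norm
  have hμfg : Integrable (fun x => ‖measureConv μ (f - g) x‖) lam := hfg.measureConv.norm
  calc _ ≤ ∫ x, ‖measureConv ν g x - measureConv μ g x‖ +
        (‖measureConv ν (f - g) x‖ + ‖measureConv μ (f - g) x‖) ∂lam :=
        integral_mono_ae (hf.measureConv.sub hf.measureConv).norm (hg'.add (hνfg.add hμfg)) hpt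
    _ = _ + (∫ x, ‖measureConv ν (f - g) x‖ ∂lam + ∫ x, ‖measureConv μ (f - g) x‖ ∂lam) := by
        rw [← integral_add hνfg hμfg]
        exact integral_add hg' (hνfg.add hμfg)
    _ ≤ _ := by
        rw [add_mul]
        gcongr <;> exact integral_norm_measureConv_le hfg

end MeasurableGroup

section TopologicalMeasurableGroup

variable [TopologicalSpace G] [IsTopologicalGroup G] [MeasurableSpace G] [OpensMeasurableSpace G]
  {g : G → E}

theorem _root_.HasCompactSupport.integrable_comp_inv_mul (hgc : HasCompactSupport g)
    (hg : Continuous g) (ν : Measure G) [IsFiniteMeasure ν] (x : G) :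
    Integrable (fun s => g (s⁻¹ * x)) ν :=
  (hg.comp (by fun_prop)).integrable_of_hasCompactSupport (hgc.comp_inv_mul x)

variable [NormedSpace ℝ E]

theorem dist_measureConv_mul_le (hgc : HasCompactSupport g) (hg : Continuous g) {h : G} {ε : ℝ}
    (hh : ∀ u, dist (g (u * h)) (g u) ≤ ε) (ν : Measure G) [IsFiniteMeasure ν] (x : G) :
    dist (measureConv ν g (x * h)) (measureConv ν g x) ≤ ε * ν.real univ := by
  rw [dist_eq_norm, measureConv, measureConv,
    ← integral_sub (hgc.integrable_comp_inv_mul hg ν _) (hgc.integrable_comp_inv_mul hg ν _)]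
  refine norm_integral_le_of_norm_le_const (Eventually.of_forall fun s => ?_)
  simpa [dist_eq_norm, mul_assoc] using hh (s⁻¹ * x)

variable [MeasurableMul₂ G] [MeasurableInv G] {lam : Measure G} [SFinite lam]
  [lam.IsMulLeftInvariant] {ν μ : Measure G} [IsFiniteMeasure ν] [IsFiniteMeasure μ]

theorem setIntegral_compl_mul_tsupport_norm_measureConv_le {K : Set G} (hK : IsCompact K)
    (hg : Integrable g lam) :
    ∫ x in (K * tsupport g)ᶜ, ‖measureConv ν g x‖ ∂lam ≤ ν.real Kᶜ * ∫ x, ‖g x‖ ∂lam := by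
  have hC : MeasurableSet (K * tsupport g)ᶜ :=
    ((isClosed_tsupport g).mul_left_of_isCompact hK).measurableSet.compl
  have hrestrict : ∀ x ∈ (K * tsupport g)ᶜ,
      measureConv ν g x = measureConv (ν.restrict Kᶜ) g x := by
    intro x hx
    refine (setIntegral_eq_integral_of_forall_compl_eq_zero fun s hs => ?_).symm
    refine image_eq_zero_of_notMem_tsupport fun hst => hx ?_
    exact ⟨s, not_not.1 hs, s⁻¹ * x, hst, mul_inv_cancel_left s x⟩
  calc ∫ x in (K * tsupport g)ᶜ, ‖measureConv ν g x‖ ∂lam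
      = ∫ x in (K * tsupport g)ᶜ, ‖measureConv (ν.restrict Kᶜ) g x‖ ∂lam :=
        setIntegral_congr_fun hC fun x hx => by rw [hrestrict x hx]
    _ ≤ ∫ x, ‖measureConv (ν.restrict Kᶜ) g x‖ ∂lam :=
        setIntegral_le_integral (hg.measureConv (ν := ν.restrict Kᶜ)).norm
          (Eventually.of_forall fun _ => norm_nonneg _)
    _ ≤ ν.real Kᶜ * ∫ x, ‖g x‖ ∂lam := by
        simpa only [measureReal_restrict_apply_univ] using
          integral_norm_measureConv_le (ν := ν.restrict Kᶜ) hg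

theorem integral_norm_measureConv_sub_le_of_forall_mem_mul_tsupport
    [IsFiniteMeasureOnCompacts lam] {K : Set G} (hK : IsCompact K) (hgc : HasCompactSupport g)
    (hg : Continuous g) {η : ℝ}
    (hη : ∀ x ∈ K * tsupport g, ‖measureConv ν g x - measureConv μ g x‖ ≤ η) :
    ∫ x, ‖measureConv ν g x - measureConv μ g x‖ ∂lam ≤
      η * lam.real (K * tsupport g) + (ν.real Kᶜ + μ.real Kᶜ) * ∫ x, ‖g x‖ ∂lam := by
  set C := K * tsupport g
  have hCc : IsCompact C := hK.mul hgc
  have hgi : Integrable g lam := hg.integrable_of_hasCompactSupport hgc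
  have hνg : Integrable (fun x => ‖measureConv ν g x‖) lam := hgi.measureConv.norm
  have hμg : Integrable (fun x => ‖measureConv μ g x‖) lam := hgi.measureConv.norm
  have hdiff : Integrable (fun x => ‖measureConv ν g x - measureConv μ g x‖) lam :=
    (hgi.measureConv.sub hgi.measureConv).norm
  have hinside : ∫ x in C, ‖measureConv ν g x - measureConv μ g x‖ ∂lam ≤ η * lam.real C :=
    (Real.le_norm_self _).trans <| norm_setIntegral_le_of_norm_le_const hCc.measure_lt_top
      fun x hx => by simpa only [norm_norm] using hη x hx
  have houtside : ∫ x in Cᶜ, ‖measureConv ν g x - measureConv μ g x‖ ∂lam ≤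
      ∫ x in Cᶜ, ‖measureConv ν g x‖ ∂lam + ∫ x in Cᶜ, ‖measureConv μ g x‖ ∂lam := by
    rw [← integral_add hνg.integrableOn hμg.integrableOn]
    exact integral_mono hdiff.integrableOn (hνg.add hμg).integrableOn fun x => norm_sub_le _ _
  rw [← integral_add_compl ((isClosed_tsupport g).mul_left_of_isCompact hK).measurableSet hdiff,
    add_mul]
  grw [hinside, houtside, setIntegral_compl_mul_tsupport_norm_measureConv_le hK hgi,
    setIntegral_compl_mul_tsupport_norm_measureConv_le hK hgi]

end TopologicalMeasurableGroup

section Convergence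

variable {ι : Type*} {l : Filter ι}

theorem exists_isCompact_eventually_measureReal_compl_lt {X : Type*} [TopologicalSpace X]
    [T2Space X] [LocallyCompactSpace X] [MeasurableSpace X] [OpensMeasurableSpace X]
    {νs : ι → Measure X} [∀ i, IsFiniteMeasure (νs i)] {μ : Measure X} [IsFiniteMeasure μ]
    [μ.InnerRegularCompactLTTop]
    (hcc : ∀ φ : X → ℂ, Continuous φ → HasCompactSupport φ →
      Tendsto (fun i => ∫ x, φ x ∂νs i) l (𝓝 (∫ x, φ x ∂μ)))
    (hmass : Tendsto (fun i => (νs i).real univ) l (𝓝 (μ.real univ))) {ε : ℝ} (hε : 0 < ε) :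
    ∃ K, IsCompact K ∧ μ.real Kᶜ < ε ∧ ∀ᶠ i in l, (νs i).real Kᶜ < ε := by
  obtain ⟨K₀, -, hK₀, hμK₀⟩ := MeasurableSet.univ.exists_isCompact_sdiff_lt
    (measure_ne_top μ univ) (ENNReal.ofReal_pos.2 hε).ne'
  obtain ⟨u, hu1, -, huc, hu01⟩ :=
    exists_continuous_one_zero_of_isCompact hK₀ isClosed_empty (disjoint_empty _)
  have hdefect : ∀ (ν : Measure X) [IsFiniteMeasure ν],
      ν.real (tsupport u)ᶜ ≤ ν.real univ - ∫ x, u x ∂ν := by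
    intro ν _
    have : ∫ x, u x ∂ν ≤ ν.real (tsupport u) :=
      (ENNReal.ofReal_le_iff_le_toReal (measure_ne_top ν _)).1 <| integral_le_measure
        (fun x _ => (hu01 x).2) fun x hx => (image_eq_zero_of_notMem_tsupport hx).le
    rw [measureReal_compl (isClosed_tsupport u).measurableSet]
    linarith
  have hdefect_μ : μ.real univ - ∫ x, u x ∂μ < ε := by
    have hK₀u : μ.real K₀ ≤ ∫ x, u x ∂μ :=
      ENNReal.toReal_le_of_le_ofReal (integral_nonneg fun x => (hu01 x).1) <|
        (u.continuous.integrable_of_hasCompactSupport huc).measure_le_integral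
          (Eventually.of_forall fun x => (hu01 x).1)
          fun x hx => (hu1 hx).ge
    have hK₀c : μ.real K₀ᶜ < ε := by
      rw [compl_eq_univ_sdiff]
      exact ENNReal.toReal_lt_of_lt_ofReal hμK₀
    rw [measureReal_compl hK₀.measurableSet] at hK₀c
    linarith
  have hu_lim : Tendsto (fun i => ∫ x, u x ∂νs i) l (𝓝 (∫ x, u x ∂μ)) := by
    have := (Complex.continuous_re.tendsto _).comp
      (hcc (fun x => (u x : ℂ)) (by fun_prop) (huc.comp_left Complex.ofReal_zero))
    simpa only [Function.comp_def, integral_complex_ofReal, Complex.ofReal_re] using this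
  refine ⟨tsupport u, huc, (hdefect μ).trans_lt hdefect_μ, ?_⟩
  filter_upwards [(hmass.sub hu_lim).eventually_lt_const hdefect_μ] with i hi
  exact (hdefect _).trans_lt hi

variable [TopologicalSpace G] [IsTopologicalGroup G] [MeasurableSpace G] [OpensMeasurableSpace G]
  {νs : ι → Measure G} [∀ i, IsFiniteMeasure (νs i)] {μ : Measure G} [IsFiniteMeasure μ]
  {g : G → ℂ}

theorem tendstoLocallyUniformly_measureConv (hgc : HasCompactSupport g) (hg : Continuous g)
    (hcc : ∀ φ : G → ℂ, Continuous φ → HasCompactSupport φ →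
      Tendsto (fun i => ∫ x, φ x ∂νs i) l (𝓝 (∫ x, φ x ∂μ)))
    {R : ℝ} (hR : ∀ᶠ i in l, (νs i).real univ ≤ R) :
    TendstoLocallyUniformly (fun i => measureConv (νs i) g) (measureConv μ g) l := by
  rw [Metric.tendstoLocallyUniformly_iff]
  intro ε hε x
  obtain ⟨δ, hδ, hδR⟩ := exists_pos_mul_lt (by positivity : 0 < ε / 3) (max R (μ.real univ))
  have hmod : ∀ (ν : Measure G) [IsFiniteMeasure ν], ν.real univ ≤ max R (μ.real univ) →
      ∀ h, (∀ u, dist (g (u * h)) (g u) < δ) →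
      dist (measureConv ν g (x * h)) (measureConv ν g x) < ε / 3 := fun ν _ hν h hh =>
    (dist_measureConv_mul_le hgc hg (fun u => (hh u).le) ν x).trans_lt <| by nlinarith
  have hnear : ∀ᶠ y in 𝓝 x, ∀ u, dist (g (u * (x⁻¹ * y))) (g u) < δ := by
    have : Tendsto (fun y => x⁻¹ * y) (𝓝 x) (𝓝 1) := by
      simpa using (continuous_const_mul x⁻¹).tendsto x
    exact this.eventually (hgc.eventually_forall_dist_mul_right_lt hg hδ)
  refine ⟨_, hnear, ?_⟩
  have hx :=
    Metric.tendsto_nhds.1 (hcc _ (by fun_prop) (hgc.comp_inv_mul x)) (ε / 3) (by positivity)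
  filter_upwards [hR, hx] with i hiR hix y hy
  have hμy := hmod μ (le_max_right _ _) _ hy
  have hiy := hmod (νs i) (hiR.trans (le_max_left _ _)) _ hy
  rw [mul_inv_cancel_left] at hμy hiy
  calc dist (measureConv μ g y) (measureConv (νs i) g y)
      ≤ dist (measureConv μ g y) (measureConv μ g x) +
          dist (measureConv μ g x) (measureConv (νs i) g x) +
          dist (measureConv (νs i) g x) (measureConv (νs i) g y) := dist_triangle4 _ _ _ _
    _ < ε / 3 + ε / 3 + ε / 3 := by
        gcongr
        all_goals rwa [dist_comm]
    _ = ε := by ring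

variable [MeasurableMul₂ G] [MeasurableInv G] {lam : Measure G} [SFinite lam]
  [lam.IsMulLeftInvariant]

theorem tendsto_integral_norm_measureConv_sub_of_hasCompactSupport [T2Space G]
    [LocallyCompactSpace G] [IsFiniteMeasureOnCompacts lam] [μ.InnerRegularCompactLTTop]
    (hcc : ∀ φ : G → ℂ, Continuous φ → HasCompactSupport φ →
      Tendsto (fun i => ∫ x, φ x ∂νs i) l (𝓝 (∫ x, φ x ∂μ)))
    (hmass : Tendsto (fun i => (νs i).real univ) l (𝓝 (μ.real univ)))
    (hgc : HasCompactSupport g) (hg : Continuous g) :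
    Tendsto (fun i => ∫ x, ‖measureConv (νs i) g x - measureConv μ g x‖ ∂lam) l (𝓝 0) := by
  refine tendsto_order.2 ⟨fun a ha => Eventually.of_forall fun i =>
    ha.trans_le (integral_nonneg fun _ => norm_nonneg _), fun ε hε => ?_⟩
  set I := ∫ x, ‖g x‖ ∂lam
  obtain ⟨δ, hδ, hδI⟩ := exists_pos_mul_lt (half_pos hε) (2 * I)
  obtain ⟨K, hK, hμK, hνK⟩ :=
    exists_isCompact_eventually_measureReal_compl_lt hcc hmass hδ
  obtain ⟨η, hη, hηK⟩ := exists_pos_mul_lt (half_pos hε) (lam.real (K * tsupport g))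
  have hunif : TendstoUniformlyOn (fun i => measureConv (νs i) g) (measureConv μ g) l
      (K * tsupport g) :=
    (tendstoLocallyUniformlyOn_iff_tendstoUniformlyOn_of_compact (hK.mul hgc)).1
      (tendstoLocallyUniformly_measureConv hgc hg hcc
        (hmass.eventually_le_const (lt_add_one _))).tendstoLocallyUniformlyOn
  filter_upwards [hνK, Metric.tendstoUniformlyOn_iff.1 hunif η hη] with i hiK hiC
  have hI : 0 ≤ I := integral_nonneg fun _ => norm_nonneg _
  calc ∫ x, ‖measureConv (νs i) g x - measureConv μ g x‖ ∂lam
      ≤ η * lam.real (K * tsupport g) + ((νs i).real Kᶜ + μ.real Kᶜ) * I :=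
        integral_norm_measureConv_sub_le_of_forall_mem_mul_tsupport hK hgc hg
          fun x hx => by simpa only [dist_eq_norm, norm_sub_rev] using (hiC x hx).le
    _ < ε := by nlinarith

theorem tendsto_integral_norm_measureConv_sub [T2Space G] [LocallyCompactSpace G] [NormalSpace G]
    [BorelSpace G] [lam.Regular] [μ.InnerRegularCompactLTTop]
    (hcc : ∀ φ : G → ℂ, Continuous φ → HasCompactSupport φ →
      Tendsto (fun i => ∫ x, φ x ∂νs i) l (𝓝 (∫ x, φ x ∂μ)))
    (hmass : Tendsto (fun i => (νs i).real univ) l (𝓝 (μ.real univ)))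
    {f : G → ℂ} (hf : Integrable f lam) :
    Tendsto (fun i => ∫ x, ‖measureConv (νs i) f x - measureConv μ f x‖ ∂lam) l (𝓝 0) := by
  refine tendsto_order.2 ⟨fun a ha => Eventually.of_forall fun i =>
    ha.trans_le (integral_nonneg fun _ => norm_nonneg _), fun ε hε => ?_⟩
  obtain ⟨δ, hδ, hδμ⟩ := exists_pos_mul_lt (half_pos hε) (2 * μ.real univ + 1)
  obtain ⟨g, hgc, hfg, hg, hgi⟩ := hf.exists_hasCompactSupport_integral_sub_le hδ
  have hg_lim := tendsto_integral_norm_measureConv_sub_of_hasCompactSupport (lam := lam) hcc hmass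
    hgc hg
  filter_upwards [hg_lim.eventually_lt_const (half_pos hε),
    hmass.eventually_le_const (lt_add_one _)] with i hig hiμ
  calc ∫ x, ‖measureConv (νs i) f x - measureConv μ f x‖ ∂lam
      ≤ ∫ x, ‖measureConv (νs i) g x - measureConv μ g x‖ ∂lam +
          ((νs i).real univ + μ.real univ) * ∫ x, ‖f x - g x‖ ∂lam :=
        integral_norm_measureConv_sub_le hf hgi
    _ ≤ ∫ x, ‖measureConv (νs i) g x - measureConv μ g x‖ ∂lam + (2 * μ.real univ + 1) * δ := by
        gcongr _ + ?_ * ?_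
        linarith
    _ < ε := by linarith

end Convergence

end MeasureTheory

theorem weakstar_mass_implies_strict_convergence_general
    {G : Type*} [TopologicalSpace G] [Group G] [IsTopologicalGroup G]
    [LocallyCompactSpace G] [T2Space G] [SecondCountableTopology G]
    [MeasurableSpace G] [BorelSpace G]
    (lam : Measure G) [lam.IsHaarMeasure]
    {ι : Type*} [SemilatticeSup ι]
    (μβ : ι → Measure G) (hfin : ∀ i, IsFiniteMeasure (μβ i))
    (μ : Measure G) [IsFiniteMeasure μ]
    (hweakstar : ∀ g : C₀(G, ℂ),
      Tendsto (fun i => ∫ x, g x ∂(μβ i)) atTop (nhds (∫ x, g x ∂μ)))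
    (hmass : Tendsto (fun i => ((μβ i) Set.univ).toReal) atTop
      (nhds ((μ Set.univ).toReal))) :
    ∀ f : G → ℂ, Integrable f lam →
      Tendsto (fun i =>
          ∫ x, ‖(∫ s, f (s⁻¹ * x) ∂(μβ i)) - ∫ s, f (s⁻¹ * x) ∂μ‖ ∂lam)
        atTop (nhds 0) := by
  intro f hf
  have := hfin
  exact tendsto_integral_norm_measureConv_sub
    (fun φ hφ hφc => hweakstar ⟨⟨φ, hφ⟩, hφc.is_zero_at_infty⟩) hmass hf

/-- Commutative case of Theorem 4.1, restricted to positive measures: if a net `(μ β)` of finite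
positive Borel measures on a second-countable locally compact group `G` converges weak-* (against
`C₀(G)`) to a finite positive measure `μ` and the total masses converge, then `μ β ⋆ f → μ ⋆ f`
in `L¹(G, λ)` for every `f ∈ L¹(G, λ)`, where `λ` is a left Haar measure. -/
theorem weakstar_mass_implies_strict_convergence
    {G : Type*} [TopologicalSpace G] [Group G] [IsTopologicalGroup G]
    [LocallyCompactSpace G] [T2Space G] [SecondCountableTopology G]
    [MeasurableSpace G] [BorelSpace G]
    (lam : Measure G) [lam.IsHaarMeasure]
    {ι : Type*} [Nonempty ι] [SemilatticeSup ι]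
    (μβ : ι → Measure G) (hfin : ∀ i, IsFiniteMeasure (μβ i))
    (μ : Measure G) [IsFiniteMeasure μ]
    (hweakstar : ∀ g : C₀(G, ℂ),
      Tendsto (fun i => ∫ x, g x ∂(μβ i)) atTop (nhds (∫ x, g x ∂μ)))
    (hmass : Tendsto (fun i => ((μβ i) Set.univ).toReal) atTop
      (nhds ((μ Set.univ).toReal))) :
    ∀ f : G → ℂ, Integrable f lam →
      Tendsto (fun i =>
          ∫ x, ‖(∫ s, f (s⁻¹ * x) ∂(μβ i)) - ∫ s, f (s⁻¹ * x) ∂μ‖ ∂lam)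
        atTop (nhds 0) :=
  weakstar_mass_implies_strict_convergence_general lam μβ hfin μ hweakstar hmass
end

section
/- Assume: (B2) for every t ∈ ℤ there exists l ∈ ℤ with B(t,l) ≠ 0; (B3) there exists t ≠ 0 with B(t,0) ≠ 0; (B4) for every t ≠ 0, B(t,l) → 0 as |l| → ∞. Let k ∈ ℤ and let γ : ℤ×ℤ → ℂ be a bounded function, and suppose that the operator u^k D_γ commutes with x_{l,t} for every l,t ∈ ℤ. Then: (i) if k ≠ 0, then γ = 0 (equivalently, D_γ = 0); (ii) if k = 0, then γ(m,n) = γ(m',n') whenever 2n − m = 2n' − m', i.e. γ(m,n) depends only on 2n − m. -/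
open Filter

/-- The Hilbert space `ℓ²(ℤ × ℤ)`. -/
noncomputable abbrev QE2Hilbert : Type := lp (fun _ : ℤ × ℤ => ℂ) 2

/-- The standard basis vector `e_{m,n}` of `ℓ²(ℤ × ℤ)`. -/
noncomputable def QE2basis (m n : ℤ) : QE2Hilbert := lp.single 2 (m, n) 1

/- Comparing the coefficients of `e_{m+2t, n+t+k}` in `T x_{l,t} e_{m,n} = x_{l,t} T e_{m,n}` gives
`B(t, j) γ(m+2t, n+t) = γ(m,n) B(t, j-k)` for all `j`. For `k = 0` and `j` with `B(t, j) ≠ 0`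
(B2) this says that `γ` is invariant under `(m,n) ↦ (m+2t, n+t)`. For `k ≠ 0`, if `γ(m+2t, n+t)`
were nonzero for the `t ≠ 0` of (B3), then `‖B(t, ·)‖` would be nondecreasing along `kℕ` or along `-kℕ`, which
is incompatible with `B(t, 0) ≠ 0` and (B4). -/

lemma smul_QE2basis_apply_self (c : ℂ) (m n : ℤ) :
    (c • QE2basis m n : QE2Hilbert) (m, n) = c := by
  simp [QE2basis]

lemma eq_zero_of_tendsto_cofinite_of_norm_le_shift {E : Type*} [NormedAddCommGroup E]
    {g : ℤ → E} {d : ℤ} (hd : d ≠ 0) (hg : Tendsto g cofinite (nhds 0))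
    (hstep : ∀ j, ‖g j‖ ≤ ‖g (j + d)‖) : g 0 = 0 := by
  have hmono : ∀ s : ℕ, ‖g 0‖ ≤ ‖g (s * d)‖ := by
    intro s
    induction s with
    | zero => simp
    | succ s ih => exact ih.trans (by simpa [add_mul] using hstep (s * d))
  have hinj : Function.Injective (fun s : ℕ => (s : ℤ) * d) := fun s s' h => by
    simpa using mul_right_cancel₀ hd h
  have hlim : Tendsto (fun s : ℕ => ‖g (s * d)‖) cofinite (nhds 0) := by
    simpa using (hg.comp hinj.tendsto_cofinite).norm
  exact norm_le_zero_iff.mp (ge_of_tendsto' hlim hmono)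

lemma eq_zero_of_mul_eq_mul_sub {f : ℤ → ℂ} (hf : Tendsto f cofinite (nhds 0)) (hf0 : f 0 ≠ 0)
    {k : ℤ} (hk : k ≠ 0) {a b : ℂ} (h : ∀ j, f j * a = b * f (j - k)) : a = 0 := by
  by_contra ha
  have hnorm : ∀ j, ‖f j‖ * ‖a‖ = ‖b‖ * ‖f (j - k)‖ := fun j => by
    simpa only [norm_mul] using congrArg norm (h j)
  apply hf0
  rcases le_total ‖a‖ ‖b‖ with hab | hba
  · have hb : 0 < ‖b‖ := (norm_pos_iff.mpr ha).trans_le hab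
    refine eq_zero_of_tendsto_cofinite_of_norm_le_shift hk hf fun j => ?_
    have := hnorm (j + k)
    rw [add_sub_cancel_right] at this
    nlinarith [norm_nonneg (f (j + k))]
  · have ha' : 0 < ‖a‖ := norm_pos_iff.mpr ha
    refine eq_zero_of_tendsto_cofinite_of_norm_le_shift (neg_ne_zero.mpr hk) hf fun j => ?_
    have := hnorm j
    rw [← sub_eq_add_neg]
    nlinarith [norm_nonneg (f (j - k))]

lemma mul_eq_mul_of_commute_QE2
    {B : ℤ × ℤ → ℂ} {x : ℤ → ℤ → (QE2Hilbert →L[ℂ] QE2Hilbert)}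
    (hx : ∀ l t m n : ℤ,
      x l t (QE2basis m n) = B (t, l - n + 1) • QE2basis (m + 2 * t) (n + t))
    {k : ℤ} {γ : ℤ × ℤ → ℂ} {T : QE2Hilbert →L[ℂ] QE2Hilbert}
    (hT : ∀ m n : ℤ, T (QE2basis m n) = γ (m, n) • QE2basis m (n + k))
    (hcomm : ∀ l t : ℤ, Commute T (x l t)) (t j m n : ℤ) :
    B (t, j) * γ (m + 2 * t, n + t) = γ (m, n) * B (t, j - k) := by
  have h := congrArg (· (QE2basis m n)) (hcomm (j + n - 1) t).eq
  simp only [mul_apply_eq_comp, hx, hT, map_smul, smul_smul] at h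
  rw [show j + n - 1 - n + 1 = j by ring, show j + n - 1 - (n + k) + 1 = j - k by ring,
    show n + k + t = n + t + k by ring] at h
  simpa only [smul_QE2basis_apply_self, mul_comm] using congrArg (· (m + 2 * t, n + t + k)) h

theorem qE2_summand_commuting_with_x_general
    (B : ℤ × ℤ → ℂ)
    (hB2 : ∀ t : ℤ, ∃ l : ℤ, B (t, l) ≠ 0)
    (hB3 : ∃ t : ℤ, t ≠ 0 ∧ B (t, 0) ≠ 0)
    (hB4 : ∀ t : ℤ, t ≠ 0 → Tendsto (fun l : ℤ => B (t, l)) cofinite (nhds 0))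
    (x : ℤ → ℤ → (QE2Hilbert →L[ℂ] QE2Hilbert))
    (hx : ∀ l t m n : ℤ,
      x l t (QE2basis m n) = B (t, l - n + 1) • QE2basis (m + 2 * t) (n + t))
    (k : ℤ) (γ : ℤ × ℤ → ℂ)
    (T : QE2Hilbert →L[ℂ] QE2Hilbert)
    (hT : ∀ m n : ℤ, T (QE2basis m n) = γ (m, n) • QE2basis m (n + k))
    (hcomm : ∀ l t : ℤ, Commute T (x l t)) :
    (k ≠ 0 → γ = 0) ∧
    (k = 0 → ∀ m n m' n' : ℤ, 2 * n - m = 2 * n' - m' → γ (m, n) = γ (m', n')) := by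
  have key := mul_eq_mul_of_commute_QE2 hx hT hcomm
  constructor
  · intro hk
    funext ⟨p, q⟩
    obtain ⟨t, ht, hBt⟩ := hB3
    have hpq : (p - 2 * t + 2 * t, q - t + t) = (p, q) := by simp
    refine eq_zero_of_mul_eq_mul_sub (b := γ (p - 2 * t, q - t)) (hB4 t ht) hBt hk fun j => ?_
    simpa only [hpq] using key t j (p - 2 * t) (q - t)
  · rintro rfl m n m' n' hrel
    obtain ⟨j, hj⟩ := hB2 (n' - n)
    have h := key (n' - n) j m n
    rw [sub_zero, show m + 2 * (n' - n) = m' by omega, show n + (n' - n) = n' by ring] at h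
    exact (mul_left_cancel₀ hj (h.trans (mul_comm _ _))).symm

/-- **Lemma 5.10.** Under conditions (B2), (B3), (B4) on the scalar family `B`, if `γ` is a
bounded function and the bounded operator `u ^ k D_γ` (the operator `T` with
`T e_{m,n} = γ(m,n) e_{m,n+k}`) commutes with every `x_{l,t}`, then: if `k ≠ 0` then `γ = 0`;
and if `k = 0` then `γ(m,n)` depends only on `2n − m`. -/
theorem qE2_summand_commuting_with_x
    (B : ℤ × ℤ → ℂ) (hB1 : ∀ t l : ℤ, ‖B (t, l)‖ ≤ 1)
    (hB2 : ∀ t : ℤ, ∃ l : ℤ, B (t, l) ≠ 0)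
    (hB3 : ∃ t : ℤ, t ≠ 0 ∧ B (t, 0) ≠ 0)
    (hB4 : ∀ t : ℤ, t ≠ 0 → Tendsto (fun l : ℤ => B (t, l)) cofinite (nhds 0))
    (x : ℤ → ℤ → (QE2Hilbert →L[ℂ] QE2Hilbert))
    (hx : ∀ l t m n : ℤ,
      x l t (QE2basis m n) = B (t, l - n + 1) • QE2basis (m + 2 * t) (n + t))
    (k : ℤ) (γ : ℤ × ℤ → ℂ) (hγ : ∃ C : ℝ, ∀ p, ‖γ p‖ ≤ C)
    (T : QE2Hilbert →L[ℂ] QE2Hilbert)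
    (hT : ∀ m n : ℤ, T (QE2basis m n) = γ (m, n) • QE2basis m (n + k))
    (hcomm : ∀ l t : ℤ, Commute T (x l t)) :
    (k ≠ 0 → γ = 0) ∧
    (k = 0 → ∀ m n m' n' : ℤ, 2 * n - m = 2 * n' - m' → γ (m, n) = γ (m', n')) :=
  qE2_summand_commuting_with_x_general B hB2 hB3 hB4 x hx k γ T hT hcomm
end

section
/- Let y be a bounded operator on H and let (γ_k)_{k∈ℤ} be a sequence of bounded functions ℤ×ℤ → ℂ such that Σ_{k=−N}^{N} (1 − |k|/(N+1)) u^k D_{γ_k} → y in the strong operator topology as N → ∞. If y commutes with x_{l,t} for every l,t ∈ ℤ, then for every k ∈ ℤ the operator u^k D_{γ_k} commutes with x_{l,t} for every l,t ∈ ℤ. -/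
open Filter

/-! Both `x_{l,t}` and `u^k D_{γ_k}` are weighted shifts of the basis `e_{m,n}`, along commuting
translations of `ℤ × ℤ`. Reading the `(m, n + k)`-th coordinate of the Cesàro sums applied to
`e_{m,n}` isolates the summand `k`, whose weight tends to `1`; hence `(y e_{m,n})(m, n + k) =
γ_k(m, n)`. Comparing one coordinate of `y x_{l,t} e_{m,n}` and `x_{l,t} y e_{m,n}` then gives
exactly the scalar identity that makes `u^k D_{γ_k}` commute with `x_{l,t}`. -/

open Topology

theorem map_eq_of_tendsto_sum_smul {α E F : Type*} [AddCommGroup E] [Module ℝ E]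
    [TopologicalSpace E] [AddCommGroup F] [Module ℝ F] [TopologicalSpace F] [T2Space F]
    [ContinuousSMul ℝ F] (φ : E →L[ℝ] F) (v : α → E) (w : ℕ → α → ℝ) (s : ℕ → Finset α)
    {k : α} {ξ : E} (hs : ∀ᶠ N in atTop, k ∈ s N) (hw : Tendsto (fun N => w N k) atTop (𝓝 1))
    (hv : ∀ j ≠ k, φ (v j) = 0) (h : Tendsto (fun N => ∑ j ∈ s N, w N j • v j) atTop (𝓝 ξ)) :
    φ ξ = φ (v k) := by
  have hφ : Tendsto (fun N => φ (∑ j ∈ s N, w N j • v j)) atTop (𝓝 (φ ξ)) :=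
    (φ.continuous.tendsto ξ).comp h
  have hk : ∀ᶠ N in atTop, φ (∑ j ∈ s N, w N j • v j) = w N k • φ (v k) := by
    filter_upwards [hs] with N hN
    rw [map_sum, Finset.sum_eq_single_of_mem k hN fun j _ hj => by
      rw [map_smul, hv j hj, smul_zero], map_smul]
  refine tendsto_nhds_unique (hφ.congr' hk) ?_
  simpa using hw.smul_const (φ (v k))

theorem tendsto_one_sub_div_natCast_add_one (a : ℝ) :
    Tendsto (fun N : ℕ => 1 - a / ((N : ℝ) + 1)) atTop (𝓝 1) := by
  have h := (tendsto_one_div_add_atTop_nhds_zero_nat (𝕜 := ℝ)).const_mul a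
  simpa [div_eq_mul_inv] using (tendsto_const_nhds (x := (1 : ℝ))).sub h

section WeightedShift

variable {𝕜 ι : Type*} [NormedField 𝕜] [DecidableEq ι] {p : ENNReal} [Fact (1 ≤ p)]

def IsWeightedShift (A : lp (fun _ : ι => 𝕜) p →L[𝕜] lp (fun _ : ι => 𝕜) p) (c : ι → 𝕜)
    (σ : ι → ι) : Prop :=
  ∀ i, A (lp.single p i 1) = c i • lp.single p (σ i) 1

namespace IsWeightedShift

variable {A A' : lp (fun _ : ι => 𝕜) p →L[𝕜] lp (fun _ : ι => 𝕜) p} {c c' : ι → 𝕜}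
  {σ σ' : ι → ι}

theorem apply_single_apply_self (hA : IsWeightedShift A c σ) (i : ι) :
    A (lp.single p i 1) (σ i) = c i := by
  simp [hA i]

theorem apply_single_apply_of_ne (hA : IsWeightedShift A c σ) {i j : ι} (hj : j ≠ σ i) :
    A (lp.single p i 1) j = 0 := by
  rw [hA i, lp.coeFn_smul, Pi.smul_apply, lp.single_apply_ne p _ _ hj, smul_zero]

theorem apply_apply (hp : p ≠ ⊤) (hA : IsWeightedShift A c σ) (hσ : σ.Injective)
    (ξ : lp (fun _ : ι => 𝕜) p) (i : ι) : A ξ (σ i) = c i * ξ i := by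
  suffices h : (lp.evalCLM 𝕜 _ p (σ i)).comp A = c i • lp.evalCLM 𝕜 _ p i from
    congrArg (· ξ) h
  refine lp.ext_continuousLinearMap hp fun j => ContinuousLinearMap.ext_ring ?_
  by_cases hji : j = i
  · subst hji
    simpa [lp.evalCLM] using hA.apply_single_apply_self j
  · have := hA.apply_single_apply_of_ne (hσ.ne hji).symm
    simp_all [lp.evalCLM]

theorem commute (hp : p ≠ ⊤) (hA : IsWeightedShift A c σ) (hA' : IsWeightedShift A' c' σ')
    (hσ : ∀ i, σ (σ' i) = σ' (σ i)) (hc : ∀ i, c' i * c (σ' i) = c i * c' (σ i)) :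
    Commute A A' := by
  refine lp.ext_continuousLinearMap hp fun i => ContinuousLinearMap.ext_ring ?_
  simp only [ContinuousLinearMap.comp_apply, lp.singleContinuousLinearMap_apply,
    mul_apply_eq_comp]
  rw [hA' i, map_smul, hA (σ' i), hA i, map_smul, hA' (σ i), smul_smul, smul_smul, hσ, hc]

/-- Compare the `σ (σ' i)`-th coordinates of `y A' e_i` and `A' y e_i`. -/
theorem weight_mul_eq_of_commute (hp : p ≠ ⊤) (hA' : IsWeightedShift A' c' σ')
    (hσ' : σ'.Injective) {y : lp (fun _ : ι => 𝕜) p →L[𝕜] lp (fun _ : ι => 𝕜) p}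
    (hy : Commute y A') {d : ι → 𝕜} (hd : ∀ i, y (lp.single p i 1) (σ i) = d i)
    (hσ : ∀ i, σ (σ' i) = σ' (σ i)) (i : ι) :
    c' i * d (σ' i) = d i * c' (σ i) := by
  have h := congrArg (fun B => B (lp.single p i 1) (σ (σ' i))) hy.eq
  simp only [mul_apply_eq_comp, hA' i, map_smul, lp.coeFn_smul, Pi.smul_apply,
    smul_eq_mul, hd] at h
  rw [h, hσ, hA'.apply_apply hp hσ', hd, mul_comm]

end IsWeightedShift

end WeightedShift

theorem qE2_cesaro_summands_commute_general
    (B : ℤ × ℤ → ℂ)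
    (x : ℤ → ℤ → (QE2Hilbert →L[ℂ] QE2Hilbert))
    (hx : ∀ l t m n : ℤ,
      x l t (QE2basis m n) = B (t, l - n + 1) • QE2basis (m + 2 * t) (n + t))
    (γ : ℤ → ℤ × ℤ → ℂ)
    (T : ℤ → (QE2Hilbert →L[ℂ] QE2Hilbert))
    (hT : ∀ k m n : ℤ, T k (QE2basis m n) = γ k (m, n) • QE2basis m (n + k))
    (y : QE2Hilbert →L[ℂ] QE2Hilbert)
    (hconv : ∀ ξ : QE2Hilbert, Tendsto (fun N : ℕ =>
        (∑ k ∈ Finset.Icc (-(N : ℤ)) (N : ℤ),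
          (1 - |(k : ℝ)| / ((N : ℝ) + 1)) • T k) ξ)
      atTop (nhds (y ξ)))
    (hcomm : ∀ l t : ℤ, Commute y (x l t)) :
    ∀ k l t : ℤ, Commute (T k) (x l t) := by
  have hp : (2 : ENNReal) ≠ ⊤ := ENNReal.ofNat_ne_top
  have hxs : ∀ l t, IsWeightedShift (x l t) (fun q => B (t, l - q.2 + 1)) (· + (2 * t, t)) :=
    fun l t q => hx l t q.1 q.2
  have hTs : ∀ k, IsWeightedShift (T k) (γ k) (· + (0, k)) := fun k ⟨m, n⟩ => by
    simpa [QE2basis] using hT k m n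
  have hy : ∀ k q, y (lp.single 2 q 1) (q + (0, k)) = γ k q := by
    intro k q
    have hk : ∀ᶠ N : ℕ in atTop, k ∈ Finset.Icc (-(N : ℤ)) N := by
      filter_upwards [eventually_ge_atTop k.natAbs] with N hN
      rw [Finset.mem_Icc]
      omega
    have hother : ∀ j ≠ k, T j (lp.single 2 q 1) (q + (0, k)) = 0 := fun j hj =>
      (hTs j).apply_single_apply_of_ne (by simpa using hj.symm)
    rw [← (hTs k).apply_single_apply_self q]
    exact map_eq_of_tendsto_sum_smul (lp.evalCLM ℝ _ 2 (q + (0, k)))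
      (fun j => T j (lp.single 2 q 1)) (fun N j => 1 - |(j : ℝ)| / ((N : ℝ) + 1)) _ hk
      (tendsto_one_sub_div_natCast_add_one |(k : ℝ)|) hother
      (by simpa only [sum_apply, smul_apply] using hconv (lp.single 2 q 1))
  intro k l t
  exact (hTs k).commute hp (hxs l t) (fun _ => add_right_comm _ _ _)
    ((hxs l t).weight_mul_eq_of_commute hp (add_left_injective _) (hcomm l t) (hy k)
      (fun _ => add_right_comm _ _ _))

/-- **Lemma 5.12.** Let `y` be a bounded operator on `ℓ²(ℤ × ℤ)` whose Cesàro sums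
`Σ_{k=-N}^{N} (1 - |k|/(N+1)) u^k D_{γ_k}` (each summand `T k = u^k D_{γ_k}` acting by
`e_{m,n} ↦ γ_k(m,n) e_{m,n+k}`) converge to `y` in the strong operator topology. If `y` commutes
with every `x_{l,t}`, then each `u^k D_{γ_k}` commutes with every `x_{l,t}`. -/
theorem qE2_cesaro_summands_commute
    (B : ℤ × ℤ → ℂ) (hB1 : ∀ t l : ℤ, ‖B (t, l)‖ ≤ 1)
    (x : ℤ → ℤ → (QE2Hilbert →L[ℂ] QE2Hilbert))
    (hx : ∀ l t m n : ℤ,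
      x l t (QE2basis m n) = B (t, l - n + 1) • QE2basis (m + 2 * t) (n + t))
    (γ : ℤ → ℤ × ℤ → ℂ) (hγ : ∀ k, ∃ C : ℝ, ∀ p, ‖γ k p‖ ≤ C)
    (T : ℤ → (QE2Hilbert →L[ℂ] QE2Hilbert))
    (hT : ∀ k m n : ℤ, T k (QE2basis m n) = γ k (m, n) • QE2basis m (n + k))
    (y : QE2Hilbert →L[ℂ] QE2Hilbert)
    (hconv : ∀ ξ : QE2Hilbert, Tendsto (fun N : ℕ =>
        (∑ k ∈ Finset.Icc (-(N : ℤ)) (N : ℤ),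
          (1 - |(k : ℝ)| / ((N : ℝ) + 1)) • T k) ξ)
      atTop (nhds (y ξ)))
    (hcomm : ∀ l t : ℤ, Commute y (x l t)) :
    ∀ k l t : ℤ, Commute (T k) (x l t) :=
  qE2_cesaro_summands_commute_general B x hx γ T hT y hconv hcomm
end

section
/- Assume: (B2) for every t ∈ ℤ there exists l ∈ ℤ with B(t,l) ≠ 0; (B3) there exists t ≠ 0 with B(t,0) ≠ 0; (B4) for every t ≠ 0, B(t,l) → 0 as |l| → ∞. Let y be a bounded operator on H which is the strong-operator limit of a net (y_i) with sup_i ‖y_i‖ < ∞, each y_i of the form y_i = Σ_{k∈F_i} u^k D_{γ_{k,i}} for a finite set F_i ⊂ ℤ and bounded functions γ_{k,i} : ℤ×ℤ → ℂ. If y commutes with x_{l,t} for every l,t ∈ ℤ, then there exists a bounded function γ : ℤ×ℤ → ℂ with y = D_γ and γ(m,n) = γ(m',n') whenever 2n − m = 2n' − m' (i.e. y is a diagonal operator whose entries depend only on 2n − m). -/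
/-!
Write `c_{m,n}(p)` for the `p`-th coordinate of `y e_{m,n}`. Every approximant `y_i` maps `e_{m,n}`
into the column `{m} × ℤ`, and coordinates are continuous on `ℓ²`, so `c_{m,n}` is supported in
that column. Comparing the `(m + 2t, n' + t)` coordinates of `y x_{l,t} e_{m,n} = x_{l,t} y e_{m,n}`
gives `B(t, l - n' + 1) c_{m,n}(m, n') = B(t, l - n + 1) c_{m+2t,n+t}(m + 2t, n' + t)`.
For `n' = n` and `l` with `B(t, l) ≠ 0` this makes the diagonal invariant under
`(m, n) ↦ (m + 2t, n + t)`, i.e. a function of `2n - m`. For `n' ≠ n` and `t = 1` it reads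
`B(1, a) c = B(1, a + d) c'` with `d = n' - n ≠ 0`; if `c ≠ 0`, then `|B(1, ·)|` is monotone along
one of the progressions `a ± ℕd`, which contradicts `B(1, ·) → 0` unless `B(1, ·) = 0`.
-/

open Filter

open Topology
open scoped ENNReal

theorem eq_zero_of_tendsto_cofinite_of_norm_le_norm_add {E : Type*} [NormedAddCommGroup E]
    {f : ℤ → E} (hf : Tendsto f cofinite (𝓝 0)) {d : ℤ} (hd : d ≠ 0)
    (h : ∀ l, ‖f l‖ ≤ ‖f (l + d)‖) : f = 0 := by
  funext l
  have hmono : ∀ k : ℕ, ‖f l‖ ≤ ‖f (l + k * d)‖ := by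
    intro k
    induction k with
    | zero => simp
    | succ k ih => exact ih.trans (by simpa [add_mul, add_assoc] using h (l + k * d))
  have hinj : Function.Injective fun k : ℕ => l + k * d := fun k k' hk => by
    simpa [hd] using hk
  have hlim : Tendsto (fun k : ℕ => ‖f (l + k * d)‖) atTop (𝓝 0) := by
    rw [← Nat.cofinite_eq_atTop]
    simpa using (hf.comp hinj.tendsto_cofinite).norm
  exact norm_le_zero_iff.mp (ge_of_tendsto' hlim hmono)

theorem eq_zero_of_forall_mul_eq_mul_add {𝕜 : Type*} [NormedDivisionRing 𝕜] {f : ℤ → 𝕜}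
    (hf : Tendsto f cofinite (𝓝 0)) (hf₀ : ∃ l, f l ≠ 0) {d : ℤ} (hd : d ≠ 0) {a b : 𝕜}
    (h : ∀ l, f l * a = f (l + d) * b) : a = 0 := by
  by_contra ha
  obtain ⟨l₀, hl₀⟩ := hf₀
  have hnorm (l : ℤ) : ‖f l‖ * ‖a‖ = ‖f (l + d)‖ * ‖b‖ := by rw [← norm_mul, ← norm_mul, h]
  have ha₀ : 0 < ‖a‖ := norm_pos_iff.mpr ha
  refine hl₀ (congrFun (?_ : f = 0) l₀)
  rcases le_total ‖b‖ ‖a‖ with hba | hab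
  · refine eq_zero_of_tendsto_cofinite_of_norm_le_norm_add hf hd fun l => ?_
    refine le_of_mul_le_mul_right ?_ ha₀
    calc ‖f l‖ * ‖a‖ = ‖f (l + d)‖ * ‖b‖ := hnorm l
      _ ≤ ‖f (l + d)‖ * ‖a‖ := by gcongr
  · refine eq_zero_of_tendsto_cofinite_of_norm_le_norm_add hf (neg_ne_zero.mpr hd) fun l => ?_
    refine le_of_mul_le_mul_right ?_ (ha₀.trans_le hab)
    calc ‖f l‖ * ‖b‖ = ‖f (l + -d + d)‖ * ‖b‖ := by rw [neg_add_cancel_right]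
      _ = ‖f (l + -d)‖ * ‖a‖ := (hnorm _).symm
      _ ≤ ‖f (l + -d)‖ * ‖b‖ := by gcongr

namespace lp

theorem apply_eq_zero_of_tendsto {α : Type*} {p : ℝ≥0∞} [Fact (1 ≤ p)] {E : α → Type*}
    [∀ i, NormedAddCommGroup (E i)] {ι : Type*} {l : Filter ι} [l.NeBot] {F : ι → lp E p}
    {f : lp E p} (hF : Tendsto F l (𝓝 f)) {a : α} (h : ∀ i, F i a = 0) : f a = 0 := by
  have hcoe := tendsto_pi_nhds.mp ((lp.uniformContinuous_coe.continuous.tendsto f).comp hF) a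
  exact tendsto_nhds_unique hcoe (tendsto_const_nhds.congr fun i => (h i).symm)

variable {α 𝕜 : Type*} [NormedField 𝕜] [DecidableEq α] {p : ℝ≥0∞}

theorem eq_smul_single_of_apply_eq_zero {f : lp (fun _ : α => 𝕜) p} {q₀ : α}
    (h : ∀ q ≠ q₀, f q = 0) : f = f q₀ • lp.single p q₀ 1 := by
  ext q
  by_cases hq : q = q₀
  · subst hq; simp
  · simp [hq, h q hq]

theorem map_apply_of_map_single [Fact (1 ≤ p)] (hp : p ≠ ∞)
    {T : lp (fun _ : α => 𝕜) p →L[𝕜] lp (fun _ : α => 𝕜) p} {σ : α → α} (hσ : σ.Injective)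
    {w : α → 𝕜} (hT : ∀ q, T (lp.single p q 1) = w q • lp.single p (σ q) 1)
    (f : lp (fun _ : α => 𝕜) p) (q : α) : T f (σ q) = w q * f q := by
  have hsum := ((lp.evalCLM 𝕜 _ p (σ q)).comp T).hasSum (lp.hasSum_single hp f)
  have hterm (q' : α) :
      (lp.evalCLM 𝕜 _ p (σ q)).comp T (lp.single (E := fun _ : α => 𝕜) p q' (f q')) =
        if q' = q then w q * f q else 0 := by
    have : lp.single (E := fun _ : α => 𝕜) p q' (f q') = f q' • lp.single p q' 1 := by
      rw [← lp.single_smul, smul_eq_mul, mul_one]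
    rw [this, map_smul, ContinuousLinearMap.comp_apply, hT]
    by_cases hq : q' = q
    · subst hq; simp [evalCLM, mul_comm]
    · simp [evalCLM, hq, hσ.ne (Ne.symm hq)]
  simp only [hterm] at hsum
  exact hsum.unique (hasSum_ite_eq q _)

theorem mul_apply_single_eq_of_commute [Fact (1 ≤ p)] (hp : p ≠ ∞)
    {T y : lp (fun _ : α => 𝕜) p →L[𝕜] lp (fun _ : α => 𝕜) p} {σ : α → α} (hσ : σ.Injective)
    {w : α → 𝕜} (hT : ∀ q, T (lp.single p q 1) = w q • lp.single p (σ q) 1)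
    (hcomm : Commute y T) (q q' : α) :
    w q' * y (lp.single p q 1) q' = w q * y (lp.single p (σ q) 1) (σ q') := by
  calc w q' * y (lp.single p q 1) q' = T (y (lp.single p q 1)) (σ q') :=
        (map_apply_of_map_single hp hσ hT _ q').symm
    _ = y (T (lp.single p q 1)) (σ q') :=
        congrArg (· (σ q')) (DFunLike.congr_fun hcomm.eq (lp.single p q 1)).symm
    _ = w q * y (lp.single p (σ q) 1) (σ q') := by rw [hT, map_smul]; rfl

end lp

namespace QE2

variable {B : ℤ × ℤ → ℂ} {x : ℤ → ℤ → (QE2Hilbert →L[ℂ] QE2Hilbert)}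
  {y : QE2Hilbert →L[ℂ] QE2Hilbert}

theorem mul_apply_basis_eq_of_commute
    (hx : ∀ l t m n : ℤ,
      x l t (QE2basis m n) = B (t, l - n + 1) • QE2basis (m + 2 * t) (n + t))
    (hcomm : ∀ l t : ℤ, Commute y (x l t)) (l t m n n' : ℤ) :
    B (t, l - n' + 1) * y (QE2basis m n) (m, n') =
      B (t, l - n + 1) * y (QE2basis (m + 2 * t) (n + t)) (m + 2 * t, n' + t) :=
  lp.mul_apply_single_eq_of_commute (σ := (· + (2 * t, t))) (w := fun q => B (t, l - q.2 + 1))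
    ENNReal.ofNat_ne_top (add_left_injective _) (fun q => hx l t q.1 q.2) (hcomm l t) (m, n) (m, n')

theorem apply_basis_eq_zero_of_snd_ne (hB : ∃ l, B (1, l) ≠ 0)
    (hB₀ : Tendsto (fun l : ℤ => B (1, l)) cofinite (𝓝 0))
    (hx : ∀ l t m n : ℤ,
      x l t (QE2basis m n) = B (t, l - n + 1) • QE2basis (m + 2 * t) (n + t))
    (hcomm : ∀ l t : ℤ, Commute y (x l t)) {m n n' : ℤ} (hn : n' ≠ n) :
    y (QE2basis m n) (m, n') = 0 := by
  refine eq_zero_of_forall_mul_eq_mul_add hB₀ hB (sub_ne_zero.mpr hn)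
    (b := y (QE2basis (m + 2 * 1) (n + 1)) (m + 2 * 1, n' + 1)) fun a => ?_
  have h := mul_apply_basis_eq_of_commute hx hcomm (a + n' - 1) 1 m n n'
  rwa [show a + n' - 1 - n' + 1 = a by ring, show a + n' - 1 - n + 1 = a + (n' - n) by ring] at h

theorem apply_basis_self_eq_shift {t : ℤ} (hB : ∃ l, B (t, l) ≠ 0)
    (hx : ∀ l t m n : ℤ,
      x l t (QE2basis m n) = B (t, l - n + 1) • QE2basis (m + 2 * t) (n + t))
    (hcomm : ∀ l t : ℤ, Commute y (x l t)) (m n : ℤ) :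
    y (QE2basis m n) (m, n) = y (QE2basis (m + 2 * t) (n + t)) (m + 2 * t, n + t) := by
  obtain ⟨l, hl⟩ := hB
  have h := mul_apply_basis_eq_of_commute hx hcomm (l + n - 1) t m n n
  rw [show l + n - 1 - n + 1 = l by ring] at h
  exact mul_left_cancel₀ hl h

theorem sum_shift_comp_diag_apply_basis_eq_zero {v : ℤ → (QE2Hilbert →L[ℂ] QE2Hilbert)}
    (hv : ∀ k m n : ℤ, v k (QE2basis m n) = QE2basis m (n + k))
    {D : (ℤ × ℤ → ℂ) → (QE2Hilbert →L[ℂ] QE2Hilbert)}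
    (hD : ∀ γ : ℤ × ℤ → ℂ, (∃ C : ℝ, ∀ p, ‖γ p‖ ≤ C) →
      ∀ m n : ℤ, D γ (QE2basis m n) = γ (m, n) • QE2basis m n)
    {F : Finset ℤ} {γ : ℤ → ℤ × ℤ → ℂ} (hγ : ∀ k, ∃ C : ℝ, ∀ p, ‖γ k p‖ ≤ C)
    {m n : ℤ} {p : ℤ × ℤ} (hp : p.1 ≠ m) :
    (∑ k ∈ F, (v k).comp (D (γ k))) (QE2basis m n) p = 0 := by
  rw [sum_apply, lp.coeFn_sum, Finset.sum_apply]
  refine Finset.sum_eq_zero fun k _ => ?_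
  have hpk : p ≠ (m, n + k) := fun h => hp (congrArg Prod.fst h)
  rw [ContinuousLinearMap.comp_apply, hD (γ k) (hγ k), map_smul, hv, lp.coeFn_smul, Pi.smul_apply,
    QE2basis, lp.single_apply_ne _ _ _ hpk, smul_zero]

end QE2

theorem qE2_separation_condition_general
    (B : ℤ × ℤ → ℂ)
    (hB2 : ∀ t : ℤ, ∃ l : ℤ, B (t, l) ≠ 0)
    (hB4 : ∀ t : ℤ, t ≠ 0 → Tendsto (fun l : ℤ => B (t, l)) cofinite (nhds 0))
    (x : ℤ → ℤ → (QE2Hilbert →L[ℂ] QE2Hilbert))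
    (hx : ∀ l t m n : ℤ,
      x l t (QE2basis m n) = B (t, l - n + 1) • QE2basis (m + 2 * t) (n + t))
    (v : ℤ → (QE2Hilbert →L[ℂ] QE2Hilbert))
    (hv : ∀ k m n : ℤ, v k (QE2basis m n) = QE2basis m (n + k))
    (D : (ℤ × ℤ → ℂ) → (QE2Hilbert →L[ℂ] QE2Hilbert))
    (hD : ∀ γ : ℤ × ℤ → ℂ, (∃ C : ℝ, ∀ p, ‖γ p‖ ≤ C) →
      ∀ m n : ℤ, D γ (QE2basis m n) = γ (m, n) • QE2basis m n)
    {ι : Type*} [Nonempty ι] [SemilatticeSup ι]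
    (yi : ι → (QE2Hilbert →L[ℂ] QE2Hilbert)) (y : QE2Hilbert →L[ℂ] QE2Hilbert)
    (hform : ∀ i, ∃ (F : Finset ℤ) (γ : ℤ → ℤ × ℤ → ℂ),
      (∀ k, ∃ C : ℝ, ∀ p, ‖γ k p‖ ≤ C) ∧
      yi i = ∑ k ∈ F, (v k).comp (D (γ k)))
    (hconv : ∀ ξ : QE2Hilbert, Tendsto (fun i => yi i ξ) atTop (nhds (y ξ)))
    (hcomm : ∀ l t : ℤ, Commute y (x l t)) :
    ∃ γ : ℤ × ℤ → ℂ, (∃ C : ℝ, ∀ p, ‖γ p‖ ≤ C) ∧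
      (∀ m n : ℤ, y (QE2basis m n) = γ (m, n) • QE2basis m n) ∧
      (∀ m n m' n' : ℤ, 2 * n - m = 2 * n' - m' → γ (m, n) = γ (m', n')) := by
  have hcol (m n : ℤ) (p : ℤ × ℤ) (hp : p.1 ≠ m) : y (QE2basis m n) p = 0 :=
    lp.apply_eq_zero_of_tendsto (hconv _) fun i => by
      obtain ⟨F, γ, hγ, hyi⟩ := hform i
      rw [hyi]
      exact QE2.sum_shift_comp_diag_apply_basis_eq_zero hv hD hγ hp
  have hdiag (m n : ℤ) : y (QE2basis m n) = y (QE2basis m n) (m, n) • QE2basis m n := by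
    refine lp.eq_smul_single_of_apply_eq_zero fun ⟨m', n'⟩ hq => ?_
    by_cases hm : m' = m
    · subst hm
      exact QE2.apply_basis_eq_zero_of_snd_ne (hB2 1) (hB4 1 one_ne_zero) hx hcomm
        fun hn => hq (by rw [hn])
    · exact hcol m n _ hm
  refine ⟨fun q => y (QE2basis q.1 q.2) q, ⟨‖y‖, fun q => ?_⟩, hdiag, fun m n m' n' h => ?_⟩
  · calc ‖y (QE2basis q.1 q.2) q‖ ≤ ‖y (QE2basis q.1 q.2)‖ := lp.norm_apply_le_norm two_ne_zero _ q
      _ ≤ ‖y‖ * ‖QE2basis q.1 q.2‖ := y.le_opNorm _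
      _ = ‖y‖ := by rw [QE2basis, lp.norm_single (by norm_num), norm_one, mul_one]
  · obtain rfl : m' = m + 2 * (n' - n) := by omega
    simpa using QE2.apply_basis_self_eq_shift (hB2 (n' - n)) hx hcomm m n

/-- The main conclusion of Section 5.3, combining Lemmas 5.10–5.12: under the hypotheses (B2),
(B3), (B4) on `B`, if a bounded operator `y` on `ℓ²(ℤ × ℤ)` is the strong-operator limit of a
uniformly bounded net of finite sums `Σ_k u^k D_{γ_{k,i}}` and commutes with every `x_{l,t}`,
then `y = D_γ` for a bounded function `γ(m,n)` depending only on `2n − m`. -/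
theorem qE2_separation_condition
    (B : ℤ × ℤ → ℂ) (hB1 : ∀ t l : ℤ, ‖B (t, l)‖ ≤ 1)
    (hB2 : ∀ t : ℤ, ∃ l : ℤ, B (t, l) ≠ 0)
    (hB3 : ∃ t : ℤ, t ≠ 0 ∧ B (t, 0) ≠ 0)
    (hB4 : ∀ t : ℤ, t ≠ 0 → Tendsto (fun l : ℤ => B (t, l)) cofinite (nhds 0))
    (x : ℤ → ℤ → (QE2Hilbert →L[ℂ] QE2Hilbert))
    (hx : ∀ l t m n : ℤ,
      x l t (QE2basis m n) = B (t, l - n + 1) • QE2basis (m + 2 * t) (n + t))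
    (v : ℤ → (QE2Hilbert →L[ℂ] QE2Hilbert))
    (hv : ∀ k m n : ℤ, v k (QE2basis m n) = QE2basis m (n + k))
    (D : (ℤ × ℤ → ℂ) → (QE2Hilbert →L[ℂ] QE2Hilbert))
    (hD : ∀ γ : ℤ × ℤ → ℂ, (∃ C : ℝ, ∀ p, ‖γ p‖ ≤ C) →
      ∀ m n : ℤ, D γ (QE2basis m n) = γ (m, n) • QE2basis m n)
    {ι : Type*} [Nonempty ι] [SemilatticeSup ι]
    (yi : ι → (QE2Hilbert →L[ℂ] QE2Hilbert)) (y : QE2Hilbert →L[ℂ] QE2Hilbert)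
    (hbdd : ∃ C : ℝ, ∀ i, ‖yi i‖ ≤ C)
    (hform : ∀ i, ∃ (F : Finset ℤ) (γ : ℤ → ℤ × ℤ → ℂ),
      (∀ k, ∃ C : ℝ, ∀ p, ‖γ k p‖ ≤ C) ∧
      yi i = ∑ k ∈ F, (v k).comp (D (γ k)))
    (hconv : ∀ ξ : QE2Hilbert, Tendsto (fun i => yi i ξ) atTop (nhds (y ξ)))
    (hcomm : ∀ l t : ℤ, Commute y (x l t)) :
    ∃ γ : ℤ × ℤ → ℂ, (∃ C : ℝ, ∀ p, ‖γ p‖ ≤ C) ∧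
      (∀ m n : ℤ, y (QE2basis m n) = γ (m, n) • QE2basis m n) ∧
      (∀ m n m' n' : ℤ, 2 * n - m = 2 * n' - m' → γ (m, n) = γ (m', n')) :=
  qE2_separation_condition_general B hB2 hB4 x hx v hv D hD yi y hform hconv hcomm
end
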